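/- arXiv:1804.10189 — 2 statements merged into one kernel-verified Lean document; each statement's English description precedes it below -/
import Mathlib

section
/- Suppose 0 < E < N, the message W_k satisfies H(W_k) = L, E-security holds, and ε-correctness holds for message k. Then the common randomness satisfies H(S) ≥ (E/(N−E)) · (L − ε). -/
open Finset

/-- Probability that the finitely-valued random variable `X` (on the finite
probability space with pmf `p`) takes the value `x`. -/
noncomputable def prC {Ω α : Type*} [Fintype Ω] [DecidableEq α]
    (p : Ω → ℝ) (X : Ω → α) (x : α) : ℝ :=
  ∑ ω, if X ω = x then p ω else 0

/-- Shannon entropy `H(X)` of a finitely-valued random variable. -/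
noncomputable def entH {Ω α : Type*} [Fintype Ω] [Fintype α] [DecidableEq α]
    (p : Ω → ℝ) (X : Ω → α) : ℝ :=
  -∑ x, prC p X x * Real.log (prC p X x)

/-- Conditional entropy `H(X|Y) = H(X,Y) - H(Y)`. -/
noncomputable def condEntH {Ω α β : Type*} [Fintype Ω] [Fintype α] [DecidableEq α]
    [Fintype β] [DecidableEq β] (p : Ω → ℝ) (X : Ω → α) (Y : Ω → β) : ℝ :=
  entH p (fun ω => (X ω, Y ω)) - entH p Y

/-- Mutual information `I(X;Y) = H(X) + H(Y) - H(X,Y)`. -/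
noncomputable def mutInfH {Ω α β : Type*} [Fintype Ω] [Fintype α] [DecidableEq α]
    [Fintype β] [DecidableEq β] (p : Ω → ℝ) (X : Ω → α) (Y : Ω → β) : ℝ :=
  entH p X + entH p Y - entH p (fun ω => (X ω, Y ω))

set_option synthInstance.maxSize 4000
set_option maxHeartbeats 8000000

section Lib
variable {Ω : Type*} [Fintype Ω] {α β γ : Type*}

lemma prC_nonneg [DecidableEq α] {p : Ω → ℝ} (hp0 : ∀ ω, 0 ≤ p ω) (X : Ω → α) (x : α) :
    0 ≤ prC p X x := by
  unfold prC
  exact Finset.sum_nonneg fun ω _ => by split <;> simp [hp0 ω]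

lemma prC_comp [Fintype α] [DecidableEq α] [DecidableEq β] (p : Ω → ℝ)
    (T : Ω → α) (f : α → β) (b : β) :
    prC p (fun ω => f (T ω)) b = ∑ a, if f a = b then prC p T a else 0 := by
  unfold prC
  have h1 : ∀ a : α, (if f a = b then ∑ ω, if T ω = a then p ω else 0 else 0)
      = ∑ ω, if f a = b then (if T ω = a then p ω else 0) else 0 := by
    intro a; split <;> simp
  rw [Finset.sum_congr rfl fun a _ => h1 a, Finset.sum_comm]
  refine Finset.sum_congr rfl fun ω _ => ?_
  rw [Finset.sum_eq_single (T ω)]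
  · by_cases h : f (T ω) = b <;> simp [h]
  · intro a _ ha
    have : ¬ (T ω = a) := fun h => ha h.symm
    simp [this]
  · simp

lemma prC_le_comp [Fintype α] [DecidableEq α] [DecidableEq β] {p : Ω → ℝ}
    (hp0 : ∀ ω, 0 ≤ p ω) (T : Ω → α) (f : α → β) (a : α) :
    prC p T a ≤ prC p (fun ω => f (T ω)) (f a) := by
  rw [prC_comp p T f (f a)]
  have h := Finset.single_le_sum (f := fun a' => if f a' = f a then prC p T a' else 0)
    (fun i _ => by by_cases h : f i = f a <;> simp [h, prC_nonneg hp0 T i]) (Finset.mem_univ a)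
  simpa using h

lemma entH_comp_expand [Fintype α] [DecidableEq α] [Fintype β] [DecidableEq β]
    (p : Ω → ℝ) (T : Ω → α) (f : α → β) :
    entH p (fun ω => f (T ω))
      = -∑ a, prC p T a * Real.log (prC p (fun ω => f (T ω)) (f a)) := by
  unfold entH
  congr 1
  calc ∑ b, prC p (fun ω => f (T ω)) b * Real.log (prC p (fun ω => f (T ω)) b)
      = ∑ b, ∑ a, (if f a = b then prC p T a * Real.log (prC p (fun ω => f (T ω)) (f a)) else 0) := by
        refine Finset.sum_congr rfl fun b _ => ?_
        rw [prC_comp p T f b, Finset.sum_mul]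
        refine Finset.sum_congr rfl fun a _ => ?_
        by_cases h : f a = b
        · rw [if_pos h, if_pos h, ← h, ← prC_comp p T f (f a)]
        · rw [if_neg h, if_neg h, zero_mul]
    _ = ∑ a, ∑ b, (if f a = b then prC p T a * Real.log (prC p (fun ω => f (T ω)) (f a)) else 0) := by
        rw [Finset.sum_comm]
    _ = ∑ a, prC p T a * Real.log (prC p (fun ω => f (T ω)) (f a)) := by
        refine Finset.sum_congr rfl fun a _ => ?_
        rw [Finset.sum_ite_eq]
        simp

lemma entH_comp_le [Fintype α] [DecidableEq α] [Fintype β] [DecidableEq β]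
    {p : Ω → ℝ} (hp0 : ∀ ω, 0 ≤ p ω) (f : α → β) (T : Ω → α) :
    entH p (fun ω => f (T ω)) ≤ entH p T := by
  rw [entH_comp_expand]
  have hT : entH p T = -∑ a, prC p T a * Real.log (prC p T a) := rfl
  rw [hT]
  apply neg_le_neg
  apply Finset.sum_le_sum
  intro a _
  rcases eq_or_lt_of_le (prC_nonneg hp0 T a) with h | h
  · rw [← h]; simp
  · exact mul_le_mul_of_nonneg_left
      (Real.log_le_log h (prC_le_comp hp0 T f a)) h.le

lemma entH_comp_le' [Fintype α] [DecidableEq α] [Fintype β] [DecidableEq β]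
    {p : Ω → ℝ} (hp0 : ∀ ω, 0 ≤ p ω) (f : α → β) (X : Ω → α) (Y : Ω → β)
    (h : ∀ ω, f (X ω) = Y ω) : entH p Y ≤ entH p X := by
  have e : (fun ω => f (X ω)) = Y := funext h
  rw [← e]
  exact entH_comp_le hp0 f X

lemma entH_congr [Fintype α] [DecidableEq α] [Fintype β] [DecidableEq β]
    {p : Ω → ℝ} (hp0 : ∀ ω, 0 ≤ p ω) (f : α → β) (g : β → α) (X : Ω → α) (Y : Ω → β)
    (hf : ∀ ω, f (X ω) = Y ω) (hg : ∀ ω, g (Y ω) = X ω) : entH p X = entH p Y :=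
  le_antisymm (entH_comp_le' hp0 g Y X hg) (entH_comp_le' hp0 f X Y hf)

lemma gibbs {ι : Type*} [Fintype ι] (f g : ι → ℝ) (hf : ∀ i, 0 ≤ f i) (hg : ∀ i, 0 ≤ g i)
    (h0 : ∀ i, f i ≠ 0 → g i ≠ 0) (hsum : ∑ i, g i ≤ ∑ i, f i) :
    ∑ i, f i * Real.log (g i) ≤ ∑ i, f i * Real.log (f i) := by
  have key : ∀ i, f i * Real.log (g i) - f i * Real.log (f i) ≤ g i - f i := by
    intro i
    rcases eq_or_ne (f i) 0 with h | h
    · simp [h, hg i]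
    · have hfi : 0 < f i := lt_of_le_of_ne (hf i) (Ne.symm h)
      have hgi : 0 < g i := lt_of_le_of_ne (hg i) (Ne.symm (h0 i h))
      have h1 : f i * Real.log (g i) - f i * Real.log (f i) = f i * Real.log (g i / f i) := by
        rw [Real.log_div hgi.ne' hfi.ne']; ring
      rw [h1]
      have h2 : Real.log (g i / f i) ≤ g i / f i - 1 :=
        Real.log_le_sub_one_of_pos (div_pos hgi hfi)
      have h3 : f i * Real.log (g i / f i) ≤ f i * (g i / f i - 1) :=
        mul_le_mul_of_nonneg_left h2 hfi.le
      have h4 : f i * (g i / f i - 1) = g i - f i := by field_simp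
      linarith
  have h5 : ∑ i, (f i * Real.log (g i) - f i * Real.log (f i)) ≤ ∑ i, (g i - f i) :=
    Finset.sum_le_sum fun i _ => key i
  rw [Finset.sum_sub_distrib, Finset.sum_sub_distrib] at h5
  linarith


lemma entH_submod [Fintype α] [DecidableEq α] [Fintype β] [DecidableEq β]
    [Fintype γ] [DecidableEq γ] {p : Ω → ℝ} (hp0 : ∀ ω, 0 ≤ p ω)
    (X : Ω → α) (Y : Ω → β) (Z : Ω → γ) :
    entH p (fun ω => (X ω, (Y ω, Z ω))) + entH p Z
      ≤ entH p (fun ω => (X ω, Z ω)) + entH p (fun ω => (Y ω, Z ω)) := by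
  set T : Ω → α × β × γ := fun ω => (X ω, (Y ω, Z ω)) with hT
  set PT : α × β × γ → ℝ := prC p T with hPT
  set Pxz : α × γ → ℝ := prC p (fun ω => (X ω, Z ω)) with hPxz
  set Pyz : β × γ → ℝ := prC p (fun ω => (Y ω, Z ω)) with hPyz
  set Pz : γ → ℝ := prC p Z with hPz
  have eT : entH p T = -∑ w, PT w * Real.log (PT w) := rfl
  have eZ : entH p Z = -∑ w : α × β × γ, PT w * Real.log (Pz w.2.2) :=
    entH_comp_expand p T (fun w => w.2.2)
  have exz : entH p (fun ω => (X ω, Z ω)) = -∑ w : α × β × γ, PT w * Real.log (Pxz (w.1, w.2.2)) :=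
    entH_comp_expand p T (fun w => (w.1, w.2.2))
  have eyz : entH p (fun ω => (Y ω, Z ω)) = -∑ w : α × β × γ, PT w * Real.log (Pyz w.2) :=
    entH_comp_expand p T (fun w => w.2)
  -- marginal facts
  have hmxz : ∀ w : α × β × γ, PT w ≤ Pxz (w.1, w.2.2) := fun w =>
    prC_le_comp hp0 T (fun w => (w.1, w.2.2)) w
  have hmyz : ∀ w : α × β × γ, PT w ≤ Pyz w.2 := fun w =>
    prC_le_comp hp0 T (fun w => w.2) w
  have hmz : ∀ w : α × β × γ, PT w ≤ Pz w.2.2 := fun w =>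
    prC_le_comp hp0 T (fun w => w.2.2) w
  have hPxz0 : ∀ w, 0 ≤ Pxz w := prC_nonneg hp0 _
  have hPyz0 : ∀ w, 0 ≤ Pyz w := prC_nonneg hp0 _
  have hPz0 : ∀ z, 0 ≤ Pz z := prC_nonneg hp0 _
  have hPT0 : ∀ w, 0 ≤ PT w := prC_nonneg hp0 _
  -- marginal sum identities
  have hzx : ∀ z, Pz z = ∑ x, Pxz (x, z) := by
    intro z
    have h : Pz z = ∑ w : α × γ, if w.2 = z then Pxz w else 0 :=
      prC_comp p (fun ω => (X ω, Z ω)) (fun w => w.2) z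
    rw [h, Fintype.sum_prod_type]
    refine Finset.sum_congr rfl fun x _ => ?_
    rw [Finset.sum_ite_eq']
    simp
  have hzy : ∀ z, Pz z = ∑ y, Pyz (y, z) := by
    intro z
    have h : Pz z = ∑ w : β × γ, if w.2 = z then Pyz w else 0 :=
      prC_comp p (fun ω => (Y ω, Z ω)) (fun w => w.2) z
    rw [h, Fintype.sum_prod_type]
    refine Finset.sum_congr rfl fun y _ => ?_
    rw [Finset.sum_ite_eq']
    simp
  have hzT : ∑ z, Pz z = ∑ w : α × β × γ, PT w := by
    have h : ∀ z, Pz z = ∑ w : α × β × γ, if w.2.2 = z then PT w else 0 := fun z =>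
      prC_comp p T (fun w => w.2.2) z
    rw [Finset.sum_congr rfl fun z _ => h z, Finset.sum_comm]
    refine Finset.sum_congr rfl fun w _ => ?_
    rw [Finset.sum_ite_eq]
    simp
  -- the auxiliary distribution
  set g : α × β × γ → ℝ :=
    fun w => if Pz w.2.2 = 0 then 0 else Pxz (w.1, w.2.2) * Pyz w.2 / Pz w.2.2 with hg
  have hg0 : ∀ w, 0 ≤ g w := by
    intro w
    rw [hg]
    dsimp only
    split
    · rfl
    · exact div_nonneg (mul_nonneg (hPxz0 _) (hPyz0 _)) (hPz0 _)
  have hgne : ∀ w, PT w ≠ 0 → g w ≠ 0 := by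
    intro w hw
    have hPTw : 0 < PT w := lt_of_le_of_ne (hPT0 w) (Ne.symm hw)
    have h1 : 0 < Pxz (w.1, w.2.2) := lt_of_lt_of_le hPTw (hmxz w)
    have h2 : 0 < Pyz w.2 := lt_of_lt_of_le hPTw (hmyz w)
    have h3 : 0 < Pz w.2.2 := lt_of_lt_of_le hPTw (hmz w)
    rw [hg]
    dsimp only
    rw [if_neg h3.ne']
    exact (div_pos (mul_pos h1 h2) h3).ne'
  have hsum : ∑ w, g w ≤ ∑ w, PT w := by
    have hinner : ∀ z, (∑ x, ∑ y, g (x, (y, z))) = if Pz z = 0 then 0 else Pz z := by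
      intro z
      by_cases hz : Pz z = 0
      · simp [hg, hz]
      · rw [if_neg hz]
        have h1 : ∀ x, (∑ y, g (x, (y, z))) = Pxz (x, z) * Pz z / Pz z := by
          intro x
          have : (∑ y, g (x, (y, z))) = ∑ y, Pxz (x, z) * Pyz (y, z) / Pz z := by
            refine Finset.sum_congr rfl fun y _ => ?_
            rw [hg]
            dsimp only
            rw [if_neg hz]
          rw [this, ← Finset.sum_div, ← Finset.mul_sum, ← hzy z]
        rw [Finset.sum_congr rfl fun x _ => h1 x, ← Finset.sum_div, ← Finset.sum_mul, ← hzx z]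
        field_simp
    have hord : ∑ w : α × β × γ, g w = ∑ z, ∑ x, ∑ y, g (x, (y, z)) := by
      rw [Fintype.sum_prod_type]
      have h1 : ∀ x, (∑ w : β × γ, g (x, w)) = ∑ z, ∑ y, g (x, (y, z)) := by
        intro x
        rw [Fintype.sum_prod_type]
        exact Finset.sum_comm
      rw [Finset.sum_congr rfl fun x _ => h1 x]
      exact Finset.sum_comm
    rw [hord, Finset.sum_congr rfl fun z _ => hinner z, ← hzT]
    refine Finset.sum_le_sum fun z _ => ?_
    split
    · exact hPz0 z
    · rfl
  have hgibbs := gibbs PT g hPT0 hg0 hgne hsum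
  have hglog : ∀ w, PT w * Real.log (g w)
      = PT w * (Real.log (Pxz (w.1, w.2.2)) + Real.log (Pyz w.2) - Real.log (Pz w.2.2)) := by
    intro w
    rcases eq_or_ne (PT w) 0 with h | h
    · rw [h, zero_mul, zero_mul]
    · have hPTw : 0 < PT w := lt_of_le_of_ne (hPT0 w) (Ne.symm h)
      have h1 : 0 < Pxz (w.1, w.2.2) := lt_of_lt_of_le hPTw (hmxz w)
      have h2 : 0 < Pyz w.2 := lt_of_lt_of_le hPTw (hmyz w)
      have h3 : 0 < Pz w.2.2 := lt_of_lt_of_le hPTw (hmz w)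
      have : g w = Pxz (w.1, w.2.2) * Pyz w.2 / Pz w.2.2 := by
        rw [hg]; dsimp only; rw [if_neg h3.ne']
      rw [this, Real.log_div (mul_pos h1 h2).ne' h3.ne', Real.log_mul h1.ne' h2.ne']
  rw [Finset.sum_congr rfl fun w _ => hglog w] at hgibbs
  have hexp : ∑ w : α × β × γ,
      PT w * (Real.log (Pxz (w.1, w.2.2)) + Real.log (Pyz w.2) - Real.log (Pz w.2.2))
      = (∑ w : α × β × γ, PT w * Real.log (Pxz (w.1, w.2.2)))
        + (∑ w : α × β × γ, PT w * Real.log (Pyz w.2))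
        - (∑ w : α × β × γ, PT w * Real.log (Pz w.2.2)) := by
    rw [← Finset.sum_add_distrib, ← Finset.sum_sub_distrib]
    refine Finset.sum_congr rfl fun w _ => by ring
  rw [hexp] at hgibbs
  have eTgoal : entH p (fun ω => (X ω, (Y ω, Z ω))) = -∑ w, PT w * Real.log (PT w) := eT
  rw [eTgoal, eZ, exz, eyz]
  linarith


lemma entH_unit {p : Ω → ℝ} (hp1 : ∑ ω, p ω = 1) : entH p (fun _ : Ω => ()) = 0 := by
  unfold entH prC
  simp [hp1]

lemma entH_subadd [Fintype α] [DecidableEq α] [Fintype β] [DecidableEq β]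
    {p : Ω → ℝ} (hp0 : ∀ ω, 0 ≤ p ω) (hp1 : ∑ ω, p ω = 1) (X : Ω → α) (Y : Ω → β) :
    entH p (fun ω => (X ω, Y ω)) ≤ entH p X + entH p Y := by
  have h : entH p (fun ω => (X ω, (Y ω, ()))) + entH p (fun _ : Ω => ())
      ≤ entH p (fun ω => (X ω, ())) + entH p (fun ω => (Y ω, ())) :=
    entH_submod hp0 X Y (fun _ => ())
  have e1 : entH p (fun ω => (X ω, (Y ω, ()))) = entH p (fun ω => (X ω, Y ω)) :=
    entH_congr hp0 (fun z => (z.1, z.2.1)) (fun z => (z.1, (z.2, ()))) _ _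
      (fun ω => rfl) (fun ω => rfl)
  have e2 : entH p (fun ω => (X ω, ())) = entH p X :=
    entH_congr hp0 (fun z => z.1) (fun x => (x, ())) _ _ (fun ω => rfl) (fun ω => rfl)
  have e3 : entH p (fun ω => (Y ω, ())) = entH p Y :=
    entH_congr hp0 (fun z => z.1) (fun x => (x, ())) _ _ (fun ω => rfl) (fun ω => rfl)
  have e4 := entH_unit (p := p) hp1
  linarith

lemma entH_le_pair [Fintype α] [DecidableEq α] [Fintype γ] [DecidableEq γ]
    {p : Ω → ℝ} (hp0 : ∀ ω, 0 ≤ p ω) (X : Ω → α) (C : Ω → γ) :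
    entH p C ≤ entH p (fun ω => (X ω, C ω)) :=
  entH_comp_le' hp0 Prod.snd (fun ω => (X ω, C ω)) C (fun ω => rfl)

lemma entH_dataproc [Fintype α] [DecidableEq α] [Fintype β] [DecidableEq β]
    [Fintype γ] [DecidableEq γ] {p : Ω → ℝ} (hp0 : ∀ ω, 0 ≤ p ω)
    (f : α → β) (U : Ω → α) (V : Ω → γ) :
    entH p (fun ω => f (U ω)) + entH p (fun ω => (V ω, U ω))
      ≤ entH p U + entH p (fun ω => (V ω, f (U ω))) := by
  have h : entH p (fun ω => (V ω, (U ω, f (U ω)))) + entH p (fun ω => f (U ω))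
      ≤ entH p (fun ω => (V ω, f (U ω))) + entH p (fun ω => (U ω, f (U ω))) :=
    entH_submod hp0 V U (fun ω => f (U ω))
  have e1 : entH p (fun ω => (V ω, (U ω, f (U ω)))) = entH p (fun ω => (V ω, U ω)) :=
    entH_congr hp0 (fun z => (z.1, z.2.1)) (fun z => (z.1, (z.2, f z.2))) _ _
      (fun ω => rfl) (fun ω => rfl)
  have e2 : entH p (fun ω => (U ω, f (U ω))) = entH p U :=
    entH_congr hp0 (fun z => z.1) (fun u => (u, f u)) _ _ (fun ω => rfl) (fun ω => rfl)
  linarith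

lemma entH_condDP {δ : Type*} [Fintype α] [DecidableEq α] [Fintype β] [DecidableEq β]
    [Fintype γ] [DecidableEq γ] [Fintype δ] [DecidableEq δ]
    {p : Ω → ℝ} (hp0 : ∀ ω, 0 ≤ p ω)
    (X : Ω → α) (Z : Ω → δ) (Y : Ω → β) (C : Ω → γ)
    (hXZ : entH p (fun ω => (X ω, (Z ω, C ω))) = entH p (fun ω => (Z ω, C ω))) :
    entH p (fun ω => (X ω, C ω)) + entH p (fun ω => (Y ω, (Z ω, C ω)))
      ≤ entH p (fun ω => (Z ω, C ω)) + entH p (fun ω => (X ω, (Y ω, C ω))) := by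
  have s1 : entH p (fun ω => (Y ω, (Z ω, (X ω, C ω)))) + entH p (fun ω => (X ω, C ω))
      ≤ entH p (fun ω => (Y ω, (X ω, C ω))) + entH p (fun ω => (Z ω, (X ω, C ω))) :=
    entH_submod hp0 Y Z (fun ω => (X ω, C ω))
  have c1 : entH p (fun ω => (Y ω, (Z ω, (X ω, C ω))))
      = entH p (fun ω => (X ω, (Y ω, (Z ω, C ω)))) :=
    entH_congr hp0 (fun z => (z.2.2.1, (z.1, (z.2.1, z.2.2.2))))
      (fun z => (z.2.1, (z.2.2.1, (z.1, z.2.2.2)))) _ _ (fun ω => rfl) (fun ω => rfl)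
  have c2 : entH p (fun ω => (Y ω, (X ω, C ω))) = entH p (fun ω => (X ω, (Y ω, C ω))) :=
    entH_congr hp0 (fun z => (z.2.1, (z.1, z.2.2))) (fun z => (z.2.1, (z.1, z.2.2))) _ _
      (fun ω => rfl) (fun ω => rfl)
  have c3 : entH p (fun ω => (Z ω, (X ω, C ω))) = entH p (fun ω => (X ω, (Z ω, C ω))) :=
    entH_congr hp0 (fun z => (z.2.1, (z.1, z.2.2))) (fun z => (z.2.1, (z.1, z.2.2))) _ _
      (fun ω => rfl) (fun ω => rfl)
  have s2 : entH p (fun ω => (Y ω, (Z ω, C ω))) ≤ entH p (fun ω => (X ω, (Y ω, (Z ω, C ω)))) :=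
    entH_le_pair hp0 X (fun ω => (Y ω, (Z ω, C ω)))
  linarith

end Lib

/-- Converse bound on the common randomness of ETPIR in the regime `E ≥ T`
(Section 7.2 of the paper): `H(S) ≥ (E/(N-E)) · (L - ε)`. -/
theorem stmt_7
    {Ω 𝕎 𝔹 𝔸 𝕊 : Type} [Fintype Ω] [Fintype 𝕎] [DecidableEq 𝕎]
    [Fintype 𝔹] [DecidableEq 𝔹] [Fintype 𝔸] [DecidableEq 𝔸]
    [Fintype 𝕊] [DecidableEq 𝕊]
    {K N E : ℕ} (hE : 0 < E) (hEN : E < N)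
    (p : Ω → ℝ) (hp0 : ∀ ω, 0 ≤ p ω) (hp1 : ∑ ω, p ω = 1)
    (W : Fin K → Ω → 𝕎) (Q : Fin N → Fin K → Ω → 𝔹)
    (A : Fin N → Fin K → Ω → 𝔸) (S : Ω → 𝕊)
    (L ε : ℝ) (k : Fin K)
    -- (i) the queries are independent of the messages
    (hQW : mutInfH p (fun ω (n : Fin N) (k : Fin K) => Q n k ω) (fun ω k => W k ω) = 0)
    -- (ii) the common randomness is independent of the messages and queries
    (hS : mutInfH p S
      (fun ω => ((fun k => W k ω), (fun (n : Fin N) (k : Fin K) => Q n k ω))) = 0)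
    -- (iii) the answers are deterministic functions of query, messages and `S`
    (hA : ∀ (n : Fin N) (k : Fin K),
      condEntH p (A n k) (fun ω => (Q n k ω, (fun j => W j ω), S ω)) = 0)
    -- `H(W_k) = L`
    (hWk : entH p (W k) = L)
    -- E-security
    (hsec : ∀ ℰ : Finset (Fin N), ℰ.card = E → ∀ k : Fin K,
      mutInfH p (fun ω j => W j ω)
        (fun ω => ((fun (n : {x // x ∈ ℰ}) => A n.1 k ω),
                   (fun (n : {x // x ∈ ℰ}) => Q n.1 k ω))) = 0)
    -- ε-correctness for message k
    (hcor : condEntH p (W k)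
      (fun ω => ((fun (n : Fin N) => A n k ω),
                 (fun (n : Fin N) => Q n k ω))) ≤ ε) :
    entH p S ≥ ((E : ℝ) / ((N : ℝ) - E)) * (L - ε) := by
  simp only [mutInfH, condEntH] at hQW hS hA hsec hcor
  -- nonemptiness of Ω, default element of 𝔸
  have hΩ : Nonempty Ω := by
    by_contra h
    rw [not_nonempty_iff] at h
    rw [Finset.univ_eq_empty, Finset.sum_empty] at hp1
    exact one_ne_zero hp1.symm
  obtain ⟨ω₀⟩ := hΩ
  have hN0 : 0 < N := lt_trans hE hEN
  have dA : 𝔸 := A ⟨0, hN0⟩ k ω₀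
  -- canonical random variables
  set WA : Ω → Fin K → 𝕎 := fun ω j => W j ω with hWA
  set QF : Ω → Fin N → Fin K → 𝔹 := fun ω n j => Q n j ω with hQF
  set Qk : Ω → Fin N → 𝔹 := fun ω n => Q n k ω with hQk
  set Av : Ω → Fin N → 𝔸 := fun ω n => A n k ω with hAv
  set Xs : Finset (Fin N) → Ω → Fin N → Option 𝔸 :=
    fun s ω n => if n ∈ s then some (A n k ω) else none with hXs
  set aF : Finset (Fin N) → ℝ :=
    fun s => entH p (fun ω => (Xs s ω, QF ω)) - entH p QF with haF
  -- restated hypotheses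
  have hQW' : entH p QF + entH p WA - entH p (fun ω => (QF ω, WA ω)) = 0 := hQW
  have hS' : entH p S + entH p (fun ω => (WA ω, QF ω))
      - entH p (fun ω => (S ω, (WA ω, QF ω))) = 0 := hS
  have hA' : ∀ n : Fin N, entH p (fun ω => (A n k ω, (Q n k ω, (WA ω, S ω))))
      - entH p (fun ω => (Q n k ω, (WA ω, S ω))) = 0 := fun n => hA n k
  have hcor' : entH p (fun ω => (W k ω, (Av ω, Qk ω)))
      - entH p (fun ω => (Av ω, Qk ω)) ≤ ε := hcor
  -- aF of the empty set
  have hXe0 : entH p (fun ω => (Xs ∅ ω, QF ω)) = entH p QF :=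
    entH_congr hp0 (fun z => z.2) (fun q => ((fun _ => none), q)) _ _
      (fun ω => rfl)
      (fun ω => by
        have h1 : (fun _ : Fin N => (none : Option 𝔸)) = Xs ∅ ω := by
          funext n; simp [hXs]
        rw [h1])
  have hE1 : aF ∅ = 0 := by
    simp only [haF]
    rw [hXe0]; ring
  -- monotonicity of aF
  have hmono : ∀ s t : Finset (Fin N), s ⊆ t → aF s ≤ aF t := by
    intro s t hst
    have h : entH p (fun ω => (Xs s ω, QF ω)) ≤ entH p (fun ω => (Xs t ω, QF ω)) :=
      entH_comp_le' hp0 (fun z => ((fun n => if n ∈ s then z.1 n else none), z.2)) _ _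
        (fun ω => by
          have h1 : (fun n => if n ∈ s then Xs t ω n else none) = Xs s ω := by
            funext n
            by_cases hn : n ∈ s
            · simp [hXs, hn, hst hn]
            · simp [hXs, hn]
          beta_reduce
          rw [h1])
    simp only [haF]
    linarith only [h]
  -- submodularity step
  have hsub3 : ∀ s u : Finset (Fin N), s ⊆ u → ∀ m, m ∉ u →
      aF (insert m u) - aF u ≤ aF (insert m s) - aF s := by
    intro s u hsu m hmu
    have hms : m ∉ s := fun h => hmu (hsu h)
    have hsm : entH p (fun ω => (A m k ω, (Xs u ω, (Xs s ω, QF ω))))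
        + entH p (fun ω => (Xs s ω, QF ω))
        ≤ entH p (fun ω => (A m k ω, (Xs s ω, QF ω)))
          + entH p (fun ω => (Xs u ω, (Xs s ω, QF ω))) :=
      entH_submod hp0 (A m k) (Xs u) (fun ω => (Xs s ω, QF ω))
    have c1 : entH p (fun ω => (A m k ω, (Xs u ω, (Xs s ω, QF ω))))
        = entH p (fun ω => (Xs (insert m u) ω, QF ω)) :=
      entH_congr hp0
        (fun z => ((fun n => if n = m then some z.1 else z.2.1 n), z.2.2.2))
        (fun z => ((z.1 m).getD dA, ((fun n => if n ∈ u then z.1 n else none),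
          ((fun n => if n ∈ s then z.1 n else none), z.2))))
        _ _
        (fun ω => by
          have h1 : (fun n => if n = m then some (A m k ω) else Xs u ω n)
              = Xs (insert m u) ω := by
            funext n
            by_cases hn : n = m
            · simp [hXs, hn]
            · simp [hXs, hn, Finset.mem_insert]
          beta_reduce
          rw [h1])
        (fun ω => by
          have h1 : (Xs (insert m u) ω m).getD dA = A m k ω := by
            simp [hXs]
          have h2 : (fun n => if n ∈ u then Xs (insert m u) ω n else none) = Xs u ω := by
            funext n
            by_cases hn : n ∈ u
            · simp [hXs, hn, Finset.mem_insert]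
            · simp [hXs, hn]
          have h3 : (fun n => if n ∈ s then Xs (insert m u) ω n else none) = Xs s ω := by
            funext n
            by_cases hn : n ∈ s
            · simp [hXs, hn, Finset.mem_insert, hsu hn]
            · simp [hXs, hn]
          beta_reduce
          rw [h1, h2, h3])
    have c2 : entH p (fun ω => (Xs u ω, (Xs s ω, QF ω)))
        = entH p (fun ω => (Xs u ω, QF ω)) :=
      entH_congr hp0
        (fun z => (z.1, z.2.2))
        (fun z : (Fin N → Option 𝔸) × (Fin N → Fin K → 𝔹) =>
          (z.1, ((fun n => if n ∈ s then z.1 n else none), z.2)))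
        _ _
        (fun ω => rfl)
        (fun ω => by
          have h3 : (fun n => if n ∈ s then Xs u ω n else none) = Xs s ω := by
            funext n
            by_cases hn : n ∈ s
            · simp [hXs, hn, hsu hn]
            · simp [hXs, hn]
          beta_reduce
          rw [h3])
    have c3 : entH p (fun ω => (A m k ω, (Xs s ω, QF ω)))
        = entH p (fun ω => (Xs (insert m s) ω, QF ω)) :=
      entH_congr hp0
        (fun z => ((fun n => if n = m then some z.1 else z.2.1 n), z.2.2))
        (fun z => ((z.1 m).getD dA, ((fun n => if n ∈ s then z.1 n else none), z.2)))
        _ _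
        (fun ω => by
          have h1 : (fun n => if n = m then some (A m k ω) else Xs s ω n)
              = Xs (insert m s) ω := by
            funext n
            by_cases hn : n = m
            · simp [hXs, hn]
            · simp [hXs, hn, Finset.mem_insert]
          beta_reduce
          rw [h1])
        (fun ω => by
          have h1 : (Xs (insert m s) ω m).getD dA = A m k ω := by
            simp [hXs]
          have h2 : (fun n => if n ∈ s then Xs (insert m s) ω n else none) = Xs s ω := by
            funext n
            by_cases hn : n ∈ s
            · simp [hXs, hn, Finset.mem_insert]
            · simp [hXs, hn]
          beta_reduce
          rw [h1, h2])
    simp only [haF]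
    linarith only [hsm, c1, c2, c3]
  -- chain bound
  have hchain : ∀ t : Finset (Fin N), ∀ s, Disjoint s t →
      aF (s ∪ t) ≤ aF s + ∑ n ∈ t, (aF (insert n s) - aF s) := by
    intro t
    induction t using Finset.induction_on with
    | empty => intro s _; simp
    | @insert m t hmt IH =>
      intro s hdisj
      rw [Finset.disjoint_insert_right] at hdisj
      obtain ⟨hms, hdt⟩ := hdisj
      have h1 : s ∪ insert m t = insert m (s ∪ t) := by
        rw [Finset.union_insert]
      have h2 : m ∉ s ∪ t := by simp [hms, hmt]
      have h3 := hsub3 s (s ∪ t) Finset.subset_union_left m h2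
      have h4 := IH s hdt
      rw [h1, Finset.sum_insert hmt]
      linarith only [h3, h4]
  -- greedy existence step
  have hstep : ∀ s : Finset (Fin N), s.card < N → ∃ n, n ∉ s ∧
      (aF Finset.univ - aF s) ≤ ((N : ℝ) - s.card) * (aF (insert n s) - aF s) := by
    intro s hcard
    have hcompl : sᶜ.card = N - s.card := by
      rw [Finset.card_compl]; simp
    have hne : sᶜ.Nonempty := by
      rw [← Finset.card_pos, hcompl]; omega
    have hu : s ∪ sᶜ = Finset.univ := Finset.union_compl s
    have h5 := hchain sᶜ s disjoint_compl_right
    rw [hu] at h5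
    have hcpos : (0:ℝ) < (N : ℝ) - s.card := by
      have : (s.card : ℝ) < N := by exact_mod_cast hcard
      linarith only [this]
    have hsum : ∑ _n ∈ sᶜ, (aF Finset.univ - aF s) / ((N : ℝ) - s.card)
        ≤ ∑ n ∈ sᶜ, (aF (insert n s) - aF s) := by
      rw [Finset.sum_const, hcompl, nsmul_eq_mul]
      have hc : ((N - s.card : ℕ) : ℝ) = (N : ℝ) - s.card := by
        have := le_of_lt hcard
        push_cast [this]
        ring
      rw [hc, mul_div_cancel₀ _ hcpos.ne']
      linarith only [h5]
    obtain ⟨n, hn, hcn⟩ := Finset.exists_le_of_sum_le hne hsum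
    refine ⟨n, Finset.mem_compl.mp hn, ?_⟩
    have := (div_le_iff₀ hcpos).mp hcn
    linarith only [this]
  -- greedy induction
  have hgreedy : ∀ i : ℕ, i ≤ N → ∃ s : Finset (Fin N), s.card = i ∧
      (i : ℝ) * aF Finset.univ ≤ (N : ℝ) * aF s := by
    intro i
    induction i with
    | zero =>
      intro _
      exact ⟨∅, Finset.card_empty, by rw [hE1]; simp⟩
    | succ i IH =>
      intro hiN
      obtain ⟨s, hsc, hsb⟩ := IH (Nat.le_of_succ_le hiN)
      have hcard : s.card < N := by omega
      obtain ⟨n, hns, hbound⟩ := hstep s hcard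
      refine ⟨insert n s, by rw [Finset.card_insert_of_notMem hns, hsc], ?_⟩
      have hmono1 : aF s ≤ aF Finset.univ := hmono s Finset.univ (Finset.subset_univ s)
      rw [hsc] at hbound
      have hiN' : (i : ℝ) + 1 ≤ (N : ℝ) := by exact_mod_cast hiN
      have hNipos : (0:ℝ) < (N : ℝ) - i := by linarith only [hiN']
      have hN0' : (0:ℝ) ≤ (N : ℝ) := Nat.cast_nonneg N
      have k1 : (N:ℝ) * (aF Finset.univ - aF s)
          ≤ (N:ℝ) * (((N:ℝ) - i) * (aF (insert n s) - aF s)) :=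
        mul_le_mul_of_nonneg_left hbound hN0'
      have k2 : ((N:ℝ) - i - 1) * ((i:ℝ) * aF Finset.univ)
          ≤ ((N:ℝ) - i - 1) * ((N:ℝ) * aF s) :=
        mul_le_mul_of_nonneg_left hsb (by linarith only [hiN'])
      have k3 : ((N:ℝ) - i) * (((i:ℝ) + 1) * aF Finset.univ)
          ≤ ((N:ℝ) - i) * ((N:ℝ) * aF (insert n s)) := by linarith only [k1, k2]
      have k4 := le_of_mul_le_mul_left k3 hNipos
      push_cast
      linarith only [k4]
  obtain ⟨ℰ, hEcard, hEb⟩ := hgreedy E (le_of_lt hEN)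
  -- Phase A
  have swap1 : entH p (fun ω => (QF ω, WA ω)) = entH p (fun ω => (WA ω, QF ω)) :=
    entH_congr hp0 (fun z => (z.2, z.1)) (fun z => (z.2, z.1)) _ _ (fun ω => rfl) (fun ω => rfl)
  have hWAQF : entH p (fun ω => (WA ω, QF ω)) = entH p WA + entH p QF := by
    linarith only [hQW', swap1]
  have hsub1 : entH p (fun ω => (W k ω, QF ω)) ≤ entH p (W k) + entH p QF :=
    entH_subadd hp0 hp1 (W k) QF
  have hdp1 : entH p (W k) + entH p (fun ω => (QF ω, WA ω))
      ≤ entH p WA + entH p (fun ω => (QF ω, W k ω)) :=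
    entH_dataproc hp0 (fun w => w k) WA QF
  have swap2 : entH p (fun ω => (QF ω, W k ω)) = entH p (fun ω => (W k ω, QF ω)) :=
    entH_congr hp0 (fun z => (z.2, z.1)) (fun z => (z.2, z.1)) _ _ (fun ω => rfl) (fun ω => rfl)
  have hWkQF : entH p (fun ω => (W k ω, QF ω)) = L + entH p QF := by
    linarith only [hsub1, hdp1, swap1, swap2, hWAQF, hWk, hQW']
  have hsm2 : entH p (fun ω => (W k ω, (QF ω, (Av ω, Qk ω)))) + entH p (fun ω => (Av ω, Qk ω))
      ≤ entH p (fun ω => (W k ω, (Av ω, Qk ω))) + entH p (fun ω => (QF ω, (Av ω, Qk ω))) :=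
    entH_submod hp0 (W k) QF (fun ω => (Av ω, Qk ω))
  have c4 : entH p (fun ω => (W k ω, (QF ω, (Av ω, Qk ω))))
      = entH p (fun ω => (W k ω, (Av ω, QF ω))) :=
    entH_congr hp0 (fun z => (z.1, (z.2.2.1, z.2.1)))
      (fun z : 𝕎 × ((Fin N → 𝔸) × (Fin N → Fin K → 𝔹)) =>
        (z.1, (z.2.2, (z.2.1, fun n => z.2.2 n k))))
      _ _ (fun ω => rfl) (fun ω => rfl)
  have c5 : entH p (fun ω => (QF ω, (Av ω, Qk ω))) = entH p (fun ω => (Av ω, QF ω)) :=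
    entH_congr hp0 (fun z => (z.2.1, z.1))
      (fun z : (Fin N → 𝔸) × (Fin N → Fin K → 𝔹) => (z.2, (z.1, fun n => z.2 n k)))
      _ _ (fun ω => rfl) (fun ω => rfl)
  have hAmain : L - ε ≤ entH p (fun ω => (W k ω, QF ω)) - entH p QF
      - entH p (fun ω => (W k ω, (Av ω, QF ω))) + entH p (fun ω => (Av ω, QF ω)) := by
    linarith only [hWkQF, hsm2, c4, c5, hcor']
  -- Phase B
  set Ae : Ω → {x // x ∈ ℰ} → 𝔸 := fun ω n => A n.1 k ω with hAe
  set Qe : Ω → {x // x ∈ ℰ} → 𝔹 := fun ω n => Q n.1 k ω with hQe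
  have hsec' : entH p WA + entH p (fun ω => (Ae ω, Qe ω))
      - entH p (fun ω => (WA ω, (Ae ω, Qe ω))) = 0 := hsec ℰ hEcard k
  have u2 : entH p (fun ω => (Ae ω, Qe ω)) = entH p (fun ω => (Xs ℰ ω, Qe ω)) :=
    entH_congr hp0
      (fun z : ({x // x ∈ ℰ} → 𝔸) × ({x // x ∈ ℰ} → 𝔹) =>
        ((fun n => if h : n ∈ ℰ then some (z.1 ⟨n, h⟩) else none), z.2))
      (fun z : (Fin N → Option 𝔸) × ({x // x ∈ ℰ} → 𝔹) =>
        ((fun n : {x // x ∈ ℰ} => (z.1 n.1).getD dA), z.2))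
      _ _
      (fun ω => by
        beta_reduce
        have h1 : (fun n => if h : n ∈ ℰ then some (Ae ω ⟨n, h⟩) else none) = Xs ℰ ω := by
          funext n
          by_cases hn : n ∈ ℰ
          · simp [hAe, hXs, hn]
          · simp [hXs, hn]
        rw [h1])
      (fun ω => by
        beta_reduce
        have h1 : (fun n : {x // x ∈ ℰ} => (Xs ℰ ω n.1).getD dA) = Ae ω := by
          funext n
          simp [hXs, hAe, n.2]
        rw [h1])
  have u2' : entH p (fun ω => (WA ω, (Ae ω, Qe ω)))
      = entH p (fun ω => (Xs ℰ ω, (WA ω, Qe ω))) :=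
    entH_congr hp0
      (fun z : (Fin K → 𝕎) × (({x // x ∈ ℰ} → 𝔸) × ({x // x ∈ ℰ} → 𝔹)) =>
        ((fun n => if h : n ∈ ℰ then some (z.2.1 ⟨n, h⟩) else none), (z.1, z.2.2)))
      (fun z : (Fin N → Option 𝔸) × ((Fin K → 𝕎) × ({x // x ∈ ℰ} → 𝔹)) =>
        (z.2.1, ((fun n : {x // x ∈ ℰ} => (z.1 n.1).getD dA), z.2.2)))
      _ _
      (fun ω => by
        beta_reduce
        have h1 : (fun n => if h : n ∈ ℰ then some (Ae ω ⟨n, h⟩) else none) = Xs ℰ ω := by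
          funext n
          by_cases hn : n ∈ ℰ
          · simp [hAe, hXs, hn]
          · simp [hXs, hn]
        rw [h1])
      (fun ω => by
        beta_reduce
        have h1 : (fun n : {x // x ∈ ℰ} => (Xs ℰ ω n.1).getD dA) = Ae ω := by
          funext n
          simp [hXs, hAe, n.2]
        rw [h1])
  have hsecX : entH p WA + entH p (fun ω => (Xs ℰ ω, Qe ω))
      = entH p (fun ω => (Xs ℰ ω, (WA ω, Qe ω))) := by linarith only [hsec', u2, u2']
  have u3a : entH p (fun ω => (WA ω, Qe ω)) ≤ entH p WA + entH p Qe :=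
    entH_subadd hp0 hp1 WA Qe
  have u3b : entH p Qe + entH p (fun ω => (WA ω, QF ω))
      ≤ entH p QF + entH p (fun ω => (WA ω, Qe ω)) :=
    entH_dataproc hp0 (fun q : Fin N → Fin K → 𝔹 => (fun n : {x // x ∈ ℰ} => q n.1 k)) QF WA
  have u3 : entH p (fun ω => (WA ω, Qe ω)) = entH p WA + entH p Qe := by
    linarith only [u3a, u3b, hWAQF]
  have u4 : entH p (fun ω => (Xs ℰ ω, (WA ω, Qe ω)))
      = entH p (fun ω => (Xs ℰ ω, Qe ω)) + entH p (fun ω => (WA ω, Qe ω)) - entH p Qe := by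
    linarith only [hsecX, u3]
  -- determinacy of the answers given (S, WA, Qe)
  have hdet : ∀ s : Finset (Fin N), s ⊆ ℰ →
      entH p (fun ω => (Xs s ω, (S ω, (WA ω, Qe ω))))
        = entH p (fun ω => (S ω, (WA ω, Qe ω))) := by
    intro s
    induction s using Finset.induction_on with
    | empty =>
      intro _
      exact entH_congr hp0 (fun z => z.2) (fun z => ((fun _ => none), z)) _ _
        (fun ω => rfl)
        (fun ω => by
          beta_reduce
          have h1 : (fun _ : Fin N => (none : Option 𝔸)) = Xs ∅ ω := by
            funext n; simp [hXs]
          rw [h1])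
    | @insert m s hms IH =>
      intro hsub
      have hmE : m ∈ ℰ := hsub (Finset.mem_insert_self m s)
      have hsE : s ⊆ ℰ := fun x hx => hsub (Finset.mem_insert_of_mem hx)
      have c6 : entH p (fun ω => (Xs (insert m s) ω, (S ω, (WA ω, Qe ω))))
          = entH p (fun ω => (A m k ω, (Xs s ω, (S ω, (WA ω, Qe ω))))) :=
        entH_congr hp0
          (fun z : (Fin N → Option 𝔸) × (𝕊 × ((Fin K → 𝕎) × ({x // x ∈ ℰ} → 𝔹))) =>
            ((z.1 m).getD dA, ((fun n => if n ∈ s then z.1 n else none), z.2)))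
          (fun z : 𝔸 × ((Fin N → Option 𝔸) × (𝕊 × ((Fin K → 𝕎) × ({x // x ∈ ℰ} → 𝔹)))) =>
            ((fun n => if n = m then some z.1 else z.2.1 n), z.2.2))
          _ _
          (fun ω => by
            beta_reduce
            have h1 : (Xs (insert m s) ω m).getD dA = A m k ω := by simp [hXs]
            have h2 : (fun n => if n ∈ s then Xs (insert m s) ω n else none) = Xs s ω := by
              funext n
              by_cases hn : n ∈ s
              · simp [hXs, hn, Finset.mem_insert]
              · simp [hXs, hn]
            rw [h1, h2])
          (fun ω => by
            beta_reduce
            have h1 : (fun n => if n = m then some (A m k ω) else Xs s ω n)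
                = Xs (insert m s) ω := by
              funext n
              by_cases hn : n = m
              · simp [hXs, hn]
              · simp [hXs, hn, Finset.mem_insert]
            rw [h1])
      have hsm3 : entH p (fun ω => (A m k ω, (Xs s ω, (S ω, (WA ω, Qe ω)))))
          + entH p (fun ω => (S ω, (WA ω, Qe ω)))
          ≤ entH p (fun ω => (A m k ω, (S ω, (WA ω, Qe ω))))
            + entH p (fun ω => (Xs s ω, (S ω, (WA ω, Qe ω)))) :=
        entH_submod hp0 (A m k) (Xs s) (fun ω => (S ω, (WA ω, Qe ω)))
      have hdrop : entH p (fun ω => (Q m k ω, (WA ω, S ω)))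
          + entH p (fun ω => (A m k ω, (S ω, (WA ω, Qe ω))))
          ≤ entH p (fun ω => (S ω, (WA ω, Qe ω)))
            + entH p (fun ω => (A m k ω, (Q m k ω, (WA ω, S ω)))) :=
        entH_dataproc hp0
          (fun z : 𝕊 × ((Fin K → 𝕎) × ({x // x ∈ ℰ} → 𝔹)) =>
            (z.2.2 ⟨m, hmE⟩, (z.2.1, z.1)))
          (fun ω => (S ω, (WA ω, Qe ω))) (A m k)
      have hge1 : entH p (fun ω => (S ω, (WA ω, Qe ω)))
          ≤ entH p (fun ω => (A m k ω, (S ω, (WA ω, Qe ω)))) :=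
        entH_le_pair hp0 (A m k) _
      have hge2 : entH p (fun ω => (S ω, (WA ω, Qe ω)))
          ≤ entH p (fun ω => (Xs (insert m s) ω, (S ω, (WA ω, Qe ω)))) :=
        entH_le_pair hp0 (Xs (insert m s)) _
      have hIH := IH hsE
      linarith only [c6, hsm3, hdrop, hge1, hge2, hIH, hA' m]
  have b1 : entH p (fun ω => (Xs ℰ ω, (S ω, (WA ω, Qe ω))))
      = entH p (fun ω => (S ω, (WA ω, Qe ω))) := hdet ℰ (Finset.Subset.refl ℰ)
  have b2drop : entH p (fun ω => (S ω, (WA ω, Qe ω)))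
      + entH p (fun ω => (Xs ℰ ω, (S ω, (WA ω, QF ω))))
      ≤ entH p (fun ω => (S ω, (WA ω, QF ω)))
        + entH p (fun ω => (Xs ℰ ω, (S ω, (WA ω, Qe ω)))) :=
    entH_dataproc hp0
      (fun z : 𝕊 × ((Fin K → 𝕎) × (Fin N → Fin K → 𝔹)) =>
        (z.1, (z.2.1, fun n : {x // x ∈ ℰ} => z.2.2 n.1 k)))
      (fun ω => (S ω, (WA ω, QF ω))) (Xs ℰ)
  have b2ge : entH p (fun ω => (S ω, (WA ω, QF ω)))
      ≤ entH p (fun ω => (Xs ℰ ω, (S ω, (WA ω, QF ω)))) :=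
    entH_le_pair hp0 (Xs ℰ) _
  have b2 : entH p (fun ω => (Xs ℰ ω, (S ω, (WA ω, QF ω))))
      = entH p (fun ω => (S ω, (WA ω, QF ω))) := by linarith only [b2drop, b2ge, b1]
  have u5 : entH p (fun ω => (Xs ℰ ω, (WA ω, Qe ω)))
      + entH p (fun ω => (QF ω, (S ω, (WA ω, Qe ω))))
      ≤ entH p (fun ω => (S ω, (WA ω, Qe ω)))
        + entH p (fun ω => (Xs ℰ ω, (QF ω, (WA ω, Qe ω)))) :=
    entH_condDP hp0 (Xs ℰ) S QF (fun ω => (WA ω, Qe ω)) b1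
  have c7 : entH p (fun ω => (S ω, (QF ω, (WA ω, Qe ω))))
      = entH p (fun ω => (S ω, (WA ω, QF ω))) :=
    entH_congr hp0
      (fun z : 𝕊 × ((Fin N → Fin K → 𝔹) × ((Fin K → 𝕎) × ({x // x ∈ ℰ} → 𝔹))) =>
        (z.1, (z.2.2.1, z.2.1)))
      (fun z : 𝕊 × ((Fin K → 𝕎) × (Fin N → Fin K → 𝔹)) =>
        (z.1, (z.2.2, (z.2.1, fun n : {x // x ∈ ℰ} => z.2.2 n.1 k))))
      _ _ (fun ω => rfl) (fun ω => rfl)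
  have c8 : entH p (fun ω => (QF ω, (WA ω, Qe ω))) = entH p (fun ω => (WA ω, QF ω)) :=
    entH_congr hp0
      (fun z : (Fin N → Fin K → 𝔹) × ((Fin K → 𝕎) × ({x // x ∈ ℰ} → 𝔹)) =>
        (z.2.1, z.1))
      (fun z : (Fin K → 𝕎) × (Fin N → Fin K → 𝔹) =>
        (z.2, (z.1, fun n : {x // x ∈ ℰ} => z.2 n.1 k)))
      _ _ (fun ω => rfl) (fun ω => rfl)
  have u6b : entH p (fun ω => (S ω, (QF ω, (WA ω, Qe ω))))
      = entH p S + entH p (fun ω => (QF ω, (WA ω, Qe ω))) := by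
    linarith only [hS', c7, c8]
  have u6d : entH p (fun ω => (QF ω, (S ω, (WA ω, Qe ω))))
      = entH p (fun ω => (S ω, (QF ω, (WA ω, Qe ω)))) :=
    entH_congr hp0 (fun z => (z.2.1, (z.1, z.2.2))) (fun z => (z.2.1, (z.1, z.2.2)))
      _ _ (fun ω => rfl) (fun ω => rfl)
  have u6a : entH p (fun ω => (S ω, (WA ω, Qe ω)))
      ≤ entH p S + entH p (fun ω => (WA ω, Qe ω)) :=
    entH_subadd hp0 hp1 S (fun ω => (WA ω, Qe ω))
  have u7 : entH p (fun ω => (Xs ℰ ω, (QF ω, (WA ω, Qe ω))))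
      = entH p (fun ω => (Xs ℰ ω, (WA ω, QF ω))) :=
    entH_congr hp0
      (fun z : (Fin N → Option 𝔸) × ((Fin N → Fin K → 𝔹) × ((Fin K → 𝕎) × ({x // x ∈ ℰ} → 𝔹))) =>
        (z.1, (z.2.2.1, z.2.1)))
      (fun z : (Fin N → Option 𝔸) × ((Fin K → 𝕎) × (Fin N → Fin K → 𝔹)) =>
        (z.1, (z.2.2, (z.2.1, fun n : {x // x ∈ ℰ} => z.2.2 n.1 k))))
      _ _ (fun ω => rfl) (fun ω => rfl)
  have u9 : entH p Qe + entH p (fun ω => (Xs ℰ ω, QF ω))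
      ≤ entH p QF + entH p (fun ω => (Xs ℰ ω, Qe ω)) :=
    entH_dataproc hp0 (fun q : Fin N → Fin K → 𝔹 => (fun n : {x // x ∈ ℰ} => q n.1 k))
      QF (Xs ℰ)
  have hii : entH p (fun ω => (Xs ℰ ω, QF ω)) + entH p (fun ω => (WA ω, QF ω))
      ≤ entH p QF + entH p (fun ω => (Xs ℰ ω, (WA ω, QF ω))) := by
    linarith only [u4, u5, u6a, u6b, u6d, u7, u9, c8]
  have hWkWA : entH p (fun ω => (W k ω, (WA ω, QF ω))) = entH p (fun ω => (WA ω, QF ω)) :=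
    entH_congr hp0 (fun z => z.2)
      (fun z : (Fin K → 𝕎) × (Fin N → Fin K → 𝔹) => (z.1 k, z)) _ _
      (fun ω => rfl) (fun ω => rfl)
  have hB5 : entH p (fun ω => (W k ω, QF ω)) + entH p (fun ω => (Xs ℰ ω, (WA ω, QF ω)))
      ≤ entH p (fun ω => (WA ω, QF ω)) + entH p (fun ω => (W k ω, (Xs ℰ ω, QF ω))) :=
    entH_condDP hp0 (W k) WA (Xs ℰ) QF hWkWA
  have hB : entH p (fun ω => (W k ω, QF ω)) + entH p (fun ω => (Xs ℰ ω, QF ω))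
      ≤ entH p QF + entH p (fun ω => (W k ω, (Xs ℰ ω, QF ω))) := by
    linarith only [hB5, hii]
  -- Phase C
  have hC2 : entH p (fun ω => (Xs ℰ ω, (WA ω, QF ω)))
      ≤ entH p (fun ω => (Xs ℰ ω, (S ω, (WA ω, QF ω)))) :=
    entH_comp_le' hp0
      (fun z : (Fin N → Option 𝔸) × (𝕊 × ((Fin K → 𝕎) × (Fin N → Fin K → 𝔹))) =>
        (z.1, z.2.2))
      _ _ (fun ω => rfl)
  have hC4 : entH p (fun ω => (S ω, (WA ω, QF ω)))
      ≤ entH p S + entH p (fun ω => (WA ω, QF ω)) :=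
    entH_subadd hp0 hp1 S (fun ω => (WA ω, QF ω))
  have hC : entH p (fun ω => (Xs ℰ ω, QF ω)) - entH p QF ≤ entH p S := by
    linarith only [hii, hC2, b2, hC4]
  -- Phase D
  have hD1 : entH p (fun ω => (W k ω, (Xs ℰ ω, QF ω)))
      ≤ entH p (fun ω => (W k ω, (Av ω, QF ω))) :=
    entH_comp_le' hp0
      (fun z : 𝕎 × ((Fin N → 𝔸) × (Fin N → Fin K → 𝔹)) =>
        (z.1, ((fun n => if n ∈ ℰ then some (z.2.1 n) else none), z.2.2)))
      _ _
      (fun ω => by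
        beta_reduce
        have h1 : (fun n => if n ∈ ℰ then some (Av ω n) else none) = Xs ℰ ω := by
          funext n
          by_cases hn : n ∈ ℰ <;> simp [hXs, hAv, hn]
        rw [h1])
  have hD : L - ε ≤ (entH p (fun ω => (Av ω, QF ω)) - entH p QF)
      - (entH p (fun ω => (Xs ℰ ω, QF ω)) - entH p QF) := by
    linarith only [hAmain, hB, hD1]
  -- bridge to aF
  have hcg : entH p (fun ω => (Xs Finset.univ ω, QF ω)) = entH p (fun ω => (Av ω, QF ω)) :=
    entH_congr hp0
      (fun z : (Fin N → Option 𝔸) × (Fin N → Fin K → 𝔹) =>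
        ((fun n => (z.1 n).getD dA), z.2))
      (fun z : (Fin N → 𝔸) × (Fin N → Fin K → 𝔹) => ((fun n => some (z.1 n)), z.2))
      _ _
      (fun ω => by
        beta_reduce
        have h1 : (fun n => (Xs Finset.univ ω n).getD dA) = Av ω := by
          funext n; simp [hXs, hAv]
        rw [h1])
      (fun ω => by
        beta_reduce
        have h1 : (fun n => some (Av ω n)) = Xs Finset.univ ω := by
          funext n; simp [hXs, hAv]
        rw [h1])
  have hbr : aF Finset.univ = entH p (fun ω => (Av ω, QF ω)) - entH p QF := by
    simp only [haF]
    linarith only [hcg]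
  have haFE : aF ℰ = entH p (fun ω => (Xs ℰ ω, QF ω)) - entH p QF := by
    simp only [haF]
  have hCx : aF ℰ ≤ entH p S := by rw [haFE]; exact hC
  have hDx : L - ε ≤ aF Finset.univ - aF ℰ := by rw [haFE, hbr]; linarith only [hD]
  -- final arithmetic
  have hNE : (0:ℝ) < (N:ℝ) - E := by
    have : (E:ℝ) < N := by exact_mod_cast hEN
    linarith only [this]
  have hE0 : (0:ℝ) ≤ (E:ℝ) := Nat.cast_nonneg E
  have hkey : (E:ℝ) * (L - ε) ≤ ((N:ℝ) - E) * aF ℰ := by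
    linarith only [hEb, mul_le_mul_of_nonneg_left hDx hE0]
  have k5 : (E:ℝ) * (L - ε) ≤ ((N:ℝ) - E) * entH p S := by
    linarith only [hkey, mul_le_mul_of_nonneg_left hCx hNE.le]
  rw [ge_iff_le, div_mul_eq_mul_div, div_le_iff₀ hNE]
  linarith only [k5]
end

section
/- Let F be a field, n ≥ 1, m ≥ 1, and let ψ_1,…,ψ_n ∈ F be pairwise distinct. Let V be the n×n Vandermonde matrix with V_{s,t} = ψ_t^s for s, t ∈ {0,…,n−1} (invertible since the ψ_t are distinct), and for each j ∈ {0,…,m−1} define M_j = V · diag(ψ_1^{jn},…,ψ_n^{jn}) · V^{−1} (so M_0 = I). Then the (mn)×n matrix obtained by vertically stacking M_0, M_1, …, M_{m−1} equals W · V^{−1}, where W is the (mn)×n matrix with entries W_{s,t} = ψ_t^s for s ∈ {0,…,mn−1}, t ∈ {0,…,n−1}; that is, the stacked matrix is the systematic form of the tall Vandermonde matrix W. -/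
/-- The stack of the matrices `M_j = V·diag(ψ_t^{jn})·V⁻¹`, `j = 0,…,m-1`
(so `M_0 = I`), equals `W·V⁻¹`, the systematic form of the tall Vandermonde
matrix `W` with entries `W_{s,t} = ψ_t^s`, `s ∈ {0,…,mn-1}` (here the row
index `s` is encoded as the pair `(j, r)` with `s = j·n + r`). -/
theorem stmt_13 (F : Type) [Field F] (n m : ℕ) (hn : 1 ≤ n) (hm : 1 ≤ m)
    (ψ : Fin n → F) (hinj : Function.Injective ψ) :
    let V : Matrix (Fin n) (Fin n) F := Matrix.of fun s t => ψ t ^ (s : ℕ)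
    let M : Fin m → Matrix (Fin n) (Fin n) F :=
      fun j => V * Matrix.diagonal (fun t => ψ t ^ ((j : ℕ) * n)) * V⁻¹
    let W : Matrix (Fin m × Fin n) (Fin n) F :=
      Matrix.of fun s t => ψ t ^ ((s.1 : ℕ) * n + (s.2 : ℕ))
    (Matrix.of fun (s : Fin m × Fin n) (t : Fin n) => M s.1 s.2 t) = W * V⁻¹ := by
  intro V M W
  ext ⟨j, r⟩ t
  have key : ∀ k : Fin n, (V * Matrix.diagonal (fun t => ψ t ^ ((j : ℕ) * n))) r k
      = W (j, r) k := by
    intro k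
    simp [Matrix.mul_diagonal, V, W, pow_add, mul_comm]
  simp only [M, Matrix.of_apply, Matrix.mul_apply]
  exact Finset.sum_congr rfl fun k _ => by rw [← Matrix.mul_apply, key]
end
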